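/- arXiv:1103.2415 — 5 statements merged into one kernel-verified Lean document; each statement's English description precedes it below -/
import Mathlib

section
/- For every integer m ≥ 3, the total domination number of the graph G_{4m+2} equals 3, i.e., γ_t(G_{4m+2}) = 3. -/
open SimpleGraph

/-- `S` is a total dominating set of `G`: every vertex of `G` has a neighbor in `S`. -/
def IsTDS {V : Type*} (G : SimpleGraph V) (S : Set V) : Prop :=
  ∀ v : V, ∃ u ∈ S, G.Adj v u

/-- The total domination number `γₜ(G)`: the minimum cardinality of a total dominating set. -/
noncomputable def gammaT {V : Type*} (G : SimpleGraph V) : ℕ :=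
  sInf {n : ℕ | ∃ S : Set V, IsTDS G S ∧ S.ncard = n}

/-- The degree of a vertex. -/
noncomputable def deg {V : Type*} (G : SimpleGraph V) (v : V) : ℕ :=
  (G.neighborSet v).ncard

/-- The maximum degree `Δ(G)`. -/
noncomputable def maxDeg {V : Type*} [Fintype V] (G : SimpleGraph V) : ℕ :=
  Finset.univ.sup fun v => deg G v

/-- The vertex-deleted graph `G − v`. -/
def delVert {V : Type*} (G : SimpleGraph V) (v : V) : SimpleGraph {u : V // u ≠ v} :=
  G.induce {u : V | u ≠ v}

/-- `G` is 3-γₜ-critical: `γₜ(G) = 3` and for every vertex `v` that is not adjacent to a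
vertex of degree one, `γₜ(G − v) = 2`. -/
def IsThreeGammaTCritical {V : Type*} (G : SimpleGraph V) : Prop :=
  gammaT G = 3 ∧
    ∀ v : V, (¬ ∃ u : V, G.Adj v u ∧ deg G u = 1) → gammaT (delVert G v) = 2

/-- Vertices of `G_{4m+2}`: `x, y, z`, `y₁,…,y_{2m−1}` and `z₁,…,z_{2m}`;
`Y i` stands for `y_{i+1}` and `Z i` for `z_{i+1}` (0-based `Fin` indices). -/
inductive V42 (m : ℕ) : Type
  | x : V42 m
  | y : V42 m
  | z : V42 m
  | Y : Fin (2 * m - 1) → V42 m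
  | Z : Fin (2 * m) → V42 m
  deriving DecidableEq, Fintype

/-- Base edge relation of `G_{4m+2}` (the paper's 1-based indices are shifted down by 1):
`x yᵢ`, `x zᵢ`, `y yᵢ`, `y z`, `z zᵢ`, `yᵢ y_{1+((i+m−2) mod (2m−1))}`,
`zᵢ zⱼ` for `i < j`, `j ≠ i + m`, and `yᵢ zⱼ` for `j ≠ i`, `j ≠ i + 1`. -/
def R42 (m : ℕ) : V42 m → V42 m → Prop
  | .x, .Y _ => True
  | .x, .Z _ => True
  | .y, .Y _ => True
  | .y, .z => True
  | .z, .Z _ => True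
  | .Y i, .Y j => j.val = (i.val + m - 1) % (2 * m - 1)
  | .Z i, .Z j => i.val < j.val ∧ j.val ≠ i.val + m
  | .Y i, .Z j => j.val ≠ i.val ∧ j.val ≠ i.val + 1
  | _, _ => False

/-- The graph `G_{4m+2}`. -/
def G42 (m : ℕ) : SimpleGraph (V42 m) := SimpleGraph.fromRel (R42 m)

/-!
Any `a` in a total dominating set `S` has a neighbour `b ∈ S`. In `G_{4m+2}` every edge `ab` has a
vertex `w` adjacent to neither `a` nor `b`, so the neighbour of `w` in `S` is a third element and
`γₜ ≥ 3`; on the other hand `{x, y, y₁}` is a total dominating set.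
-/

theorem IsTDS.two_lt_ncard {V : Type*} [Finite V] [Nonempty V] {G : SimpleGraph V} {S : Set V}
    (hG : ∀ u v, G.Adj u v → ∃ w, ¬G.Adj w u ∧ ¬G.Adj w v) (hS : IsTDS G S) : 2 < S.ncard := by
  obtain ⟨a, ha, -⟩ := hS (Classical.arbitrary V)
  obtain ⟨b, hb, hab⟩ := hS a
  obtain ⟨w, hwa, hwb⟩ := hG a b hab
  obtain ⟨c, hc, hwc⟩ := hS w
  exact (Set.two_lt_ncard_iff S.toFinite).2
    ⟨a, b, c, ha, hb, hc, hab.ne, fun h => hwa (h ▸ hwc), fun h => hwb (h ▸ hwc)⟩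

theorem gammaT_eq_three_of_isTDS {V : Type*} [Finite V] [Nonempty V] {G : SimpleGraph V} {S : Set V}
    (hG : ∀ u v, G.Adj u v → ∃ w, ¬G.Adj w u ∧ ¬G.Adj w v) (hS : IsTDS G S) (hS3 : S.ncard = 3) :
    gammaT G = 3 := by
  obtain ⟨T, hT, hTcard⟩ : ∃ T, IsTDS G T ∧ T.ncard = gammaT G :=
    Nat.sInf_mem (s := {n | ∃ T : Set V, IsTDS G T ∧ T.ncard = n}) ⟨S.ncard, S, hS, rfl⟩
  have hle : gammaT G ≤ S.ncard := Nat.sInf_le ⟨S, hS, rfl⟩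
  have hlt := hT.two_lt_ncard hG
  omega

section G42
variable {m : ℕ}

lemma adj_Y_Y_iff (hm : 2 ≤ m) (i k : Fin (2 * m - 1)) :
    (G42 m).Adj (.Y i) (.Y k) ↔
      (k : ℕ) = i + (m - 1) ∨ (i : ℕ) = k + m ∨ (i : ℕ) = k + (m - 1) ∨ (k : ℕ) = i + m := by
  have mod_iff : ∀ a b : ℕ, a < 2 * m - 1 → b < 2 * m - 1 →
      (b = (a + m - 1) % (2 * m - 1) ↔ b = a + (m - 1) ∨ a = b + m) := by
    intro a b ha hb
    rcases Nat.lt_or_ge (a + m - 1) (2 * m - 1) with h | h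
    · rw [Nat.mod_eq_of_lt h]; omega
    · rw [Nat.mod_eq_sub_mod h, Nat.mod_eq_of_lt (by omega)]; omega
  simp only [G42, fromRel_adj, R42, ne_eq, V42.Y.injEq, mod_iff i k i.isLt k.isLt,
    mod_iff k i k.isLt i.isLt]
  omega

lemma adj_Z_Z_iff (i j : Fin (2 * m)) :
    (G42 m).Adj (.Z i) (.Z j) ↔ (i : ℕ) ≠ j ∧ (i : ℕ) ≠ j + m ∧ (j : ℕ) ≠ i + m := by
  simp only [G42, fromRel_adj, R42, ne_eq, V42.Z.injEq, Fin.ext_iff]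
  omega

lemma adj_Y_Z_iff (i : Fin (2 * m - 1)) (j : Fin (2 * m)) :
    (G42 m).Adj (.Y i) (.Z j) ↔ (j : ℕ) ≠ i ∧ (j : ℕ) ≠ i + 1 := by
  simp [G42, R42]

lemma adj_Z_Y_iff (i : Fin (2 * m - 1)) (j : Fin (2 * m)) :
    (G42 m).Adj (.Z j) (.Y i) ↔ (j : ℕ) ≠ i ∧ (j : ℕ) ≠ i + 1 := by
  rw [adj_comm, adj_Y_Z_iff]

lemma exists_not_adj_Y_Z (hm : 2 ≤ m) (i : Fin (2 * m - 1)) (j : Fin (2 * m)) :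
    ∃ w, ¬(G42 m).Adj w (.Y i) ∧ ¬(G42 m).Adj w (.Z j) := by
  have hi := i.isLt
  have hj := j.isLt
  -- The non-neighbours of `z_j` are `y_{j-1}`, `y_j`, `z_j` and `z_{j ± m}`; those of `y_i` among
  -- them are `z_i`, `z_{i+1}` and the `y_k` with `|k - i| ∉ {m - 1, m}`.
  by_cases hZ_i : (i : ℕ) = j + m ∨ (j : ℕ) = i + m
  · refine ⟨.Z ⟨i, by omega⟩, ?_, ?_⟩ <;> simp only [adj_Z_Y_iff, adj_Z_Z_iff] <;> omega
  by_cases hZ_succ : (i : ℕ) + 1 = j + m ∨ (j : ℕ) = i + 1 + m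
  · refine ⟨.Z ⟨i + 1, by omega⟩, ?_, ?_⟩ <;> simp only [adj_Z_Y_iff, adj_Z_Z_iff] <;> omega
  by_cases hY_j : (j : ℕ) < 2 * m - 1 ∧
      ¬((i : ℕ) = j + (m - 1) ∨ (j : ℕ) = i + m ∨ (j : ℕ) = i + (m - 1) ∨ (i : ℕ) = j + m)
  · refine ⟨.Y ⟨j, hY_j.1⟩, ?_, ?_⟩ <;> simp only [adj_Y_Y_iff hm, adj_Y_Z_iff] <;> omega
  · refine ⟨.Y ⟨j - 1, by omega⟩, ?_, ?_⟩ <;> simp only [adj_Y_Y_iff hm, adj_Y_Z_iff] <;> omega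

instance : Nonempty (V42 m) := ⟨.x⟩

lemma isTDS_G42 (k : Fin (2 * m - 1)) : IsTDS (G42 m) {.x, .y, .Y k} := by
  intro v
  cases v with
  | x | y => exact ⟨.Y k, by simp, by simp [G42, R42]⟩
  | z => exact ⟨.y, by simp, by simp [G42, R42]⟩
  | Y | Z => exact ⟨.x, by simp, by simp [G42, R42]⟩

lemma ncard_triple_G42 (k : Fin (2 * m - 1)) : ({.x, .y, .Y k} : Set (V42 m)).ncard = 3 :=
  Set.ncard_eq_three.2 ⟨_, _, _, by simp, by simp, by simp, rfl⟩

lemma exists_not_adj_of_R42 (hm : 2 ≤ m) {u v : V42 m} (h : R42 m u v) :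
    ∃ w, ¬(G42 m).Adj w u ∧ ¬(G42 m).Adj w v := by
  cases u <;> cases v <;> simp only [R42] at h
  case x.Y => exact ⟨.z, by simp [G42, R42], by simp [G42, R42]⟩
  case x.Z => exact ⟨.y, by simp [G42, R42], by simp [G42, R42]⟩
  case y.Y i =>
    exact ⟨.Z ⟨i, by omega⟩, by simp [G42, R42], by rw [adj_Z_Y_iff]; dsimp only; omega⟩
  case y.z => exact ⟨.x, by simp [G42, R42], by simp [G42, R42]⟩
  case z.Z j =>
    exact ⟨.Y ⟨min j (2 * m - 2), by omega⟩, by simp [G42, R42],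
      by rw [adj_Y_Z_iff]; dsimp only; omega⟩
  case Y.Y => exact ⟨.z, by simp [G42, R42], by simp [G42, R42]⟩
  case Z.Z => exact ⟨.y, by simp [G42, R42], by simp [G42, R42]⟩
  case Y.Z => exact exists_not_adj_Y_Z hm _ _

lemma exists_not_adj_G42 (hm : 2 ≤ m) {u v : V42 m} (h : (G42 m).Adj u v) :
    ∃ w, ¬(G42 m).Adj w u ∧ ¬(G42 m).Adj w v := by
  rcases (fromRel_adj _ _ _).1 h with ⟨-, h | h⟩
  · exact exists_not_adj_of_R42 hm h
  · obtain ⟨w, hv, hu⟩ := exists_not_adj_of_R42 hm h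
    exact ⟨w, hu, hv⟩

end G42

/-- Lemma 2.3: `γₜ(G_{4m+2}) = 3` for every `m ≥ 3`. -/
theorem gammaT_G42 (m : ℕ) (hm : 3 ≤ m) : gammaT (G42 m) = 3 :=
  gammaT_eq_three_of_isTDS (fun _ _ => exists_not_adj_G42 (by omega)) (isTDS_G42 ⟨0, by omega⟩)
    (ncard_triple_G42 _)
end

section
/- For every integer m ≥ 3, no 2-element subset of the vertices of G_{4m+2} is a total dominating set of G_{4m+2}; equivalently, γ_t(G_{4m+2}) ≥ 3. -/
open SimpleGraph

lemma adj42 {m : ℕ} {a b : V42 m} :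
    (G42 m).Adj a b ↔ a ≠ b ∧ (R42 m a b ∨ R42 m b a) :=
  SimpleGraph.fromRel_adj _ a b

lemma mod_two (a n : ℕ) (h2 : a < 2*n) :
    ∃ A, a % n = A ∧ A < n ∧ (A = a ∨ A + n = a) := by
  rcases Nat.lt_or_ge a n with h|h
  · exact ⟨a, Nat.mod_eq_of_lt h, h, Or.inl rfl⟩
  · refine ⟨a - n, ?_, by omega, Or.inr (by omega)⟩
    rw [Nat.mod_eq_sub_mod h, Nat.mod_eq_of_lt (by omega)]

lemma keyYZ (m : ℕ) (hm : 3 ≤ m) (i : Fin (2*m-1)) (j : Fin (2*m))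
    (h1 : j.val ≠ i.val) (h2 : j.val ≠ i.val + 1) :
    ∃ v : V42 m, ¬ (G42 m).Adj v (.Y i) ∧ ¬ (G42 m).Adj v (.Z j) := by
  have hiv := i.isLt; have hjv := j.isLt
  by_cases hc1 : j.val = i.val + m ∨ i.val = j.val + m
  · refine ⟨.Z ⟨i.val, by omega⟩, ?_, ?_⟩ <;> simp [adj42, R42, Fin.ext_iff] <;> omega
  · by_cases hc2 : j.val = i.val + 1 + m ∨ i.val + 1 = j.val + m
    · refine ⟨.Z ⟨i.val + 1, by omega⟩, ?_, ?_⟩ <;> simp [adj42, R42, Fin.ext_iff] <;> omega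
    · push_neg at hc1 hc2
      obtain ⟨A, hA, hA1, hA2⟩ := mod_two (i.val + m - 1) (2*m-1) (by omega)
      obtain ⟨B, hB, hB1, hB2⟩ := mod_two (j.val + m - 1) (2*m-1) (by omega)
      by_cases h3 : j.val < 2*m-1 ∧ j.val ≠ A ∧ i.val ≠ B
      · refine ⟨.Y ⟨j.val, h3.1⟩, ?_, ?_⟩ <;>
          simp [adj42, R42, Fin.ext_iff] <;> (try rw [hA]) <;> (try rw [hB]) <;> omega
      · have hj1 : 1 ≤ j.val := by
          rcases hA2 with h|h <;> rcases hB2 with h'|h' <;> omega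
        obtain ⟨C, hC, hC1, hC2⟩ := mod_two (j.val - 1 + m - 1) (2*m-1) (by omega)
        refine ⟨.Y ⟨j.val - 1, by omega⟩, ?_, ?_⟩ <;>
          simp [adj42, R42, Fin.ext_iff] <;> (try rw [hA]) <;> (try rw [hC]) <;> omega

lemma key (m : ℕ) (hm : 3 ≤ m) : ∀ a b : V42 m, (G42 m).Adj a b →
    ∃ v, ¬ (G42 m).Adj v a ∧ ¬ (G42 m).Adj v b := by
  intro a b hab
  cases a with
  | x =>
    cases b with
    | x => simp [adj42, R42] at hab
    | y => simp [adj42, R42] at hab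
    | z => simp [adj42, R42] at hab
    | Y i => exact ⟨.z, by simp [adj42, R42], by simp [adj42, R42]⟩
    | Z i => exact ⟨.y, by simp [adj42, R42], by simp [adj42, R42]⟩
  | y =>
    cases b with
    | x => simp [adj42, R42] at hab
    | y => simp [adj42, R42] at hab
    | z => exact ⟨.x, by simp [adj42, R42], by simp [adj42, R42]⟩
    | Y i =>
      refine ⟨.Z ⟨i.val, by have := i.isLt; omega⟩, by simp [adj42, R42], ?_⟩
      simp [adj42, R42]
    | Z i => simp [adj42, R42] at hab
  | z =>
    cases b with
    | x => simp [adj42, R42] at hab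
    | y => exact ⟨.x, by simp [adj42, R42], by simp [adj42, R42]⟩
    | z => simp [adj42, R42] at hab
    | Y i => simp [adj42, R42] at hab
    | Z i =>
      rcases Nat.lt_or_ge i.val (2*m-1) with h|h
      · refine ⟨.Y ⟨i.val, h⟩, by simp [adj42, R42], ?_⟩
        simp [adj42, R42]
      · have h2 : i.val = 2*m-1 := by have := i.isLt; omega
        refine ⟨.Y ⟨2*m-2, by omega⟩, by simp [adj42, R42], ?_⟩
        simp [adj42, R42]; omega
  | Y i =>
    cases b with
    | x => exact ⟨.z, by simp [adj42, R42], by simp [adj42, R42]⟩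
    | y =>
      refine ⟨.Z ⟨i.val, by have := i.isLt; omega⟩, ?_, by simp [adj42, R42]⟩
      simp [adj42, R42]
    | z => simp [adj42, R42] at hab
    | Y j => exact ⟨.z, by simp [adj42, R42], by simp [adj42, R42]⟩
    | Z j =>
      have h' : j.val ≠ i.val ∧ j.val ≠ i.val + 1 := by
        simpa [adj42, R42] using hab
      exact keyYZ m hm i j h'.1 h'.2
  | Z i =>
    cases b with
    | x => exact ⟨.y, by simp [adj42, R42], by simp [adj42, R42]⟩
    | y => simp [adj42, R42] at hab
    | z =>
      rcases Nat.lt_or_ge i.val (2*m-1) with h|h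
      · refine ⟨.Y ⟨i.val, h⟩, ?_, by simp [adj42, R42]⟩
        simp [adj42, R42]
      · have h2 : i.val = 2*m-1 := by have := i.isLt; omega
        refine ⟨.Y ⟨2*m-2, by omega⟩, ?_, by simp [adj42, R42]⟩
        simp [adj42, R42]; omega
    | Y j =>
      have h' : i.val ≠ j.val ∧ i.val ≠ j.val + 1 := by
        simpa [adj42, R42] using hab
      obtain ⟨v, hv1, hv2⟩ := keyYZ m hm j i h'.1 h'.2
      exact ⟨v, hv2, hv1⟩
    | Z j => exact ⟨.y, by simp [adj42, R42], by simp [adj42, R42]⟩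

/-- No 2-element vertex subset totally dominates `G_{4m+2}`; equivalently `γₜ(G_{4m+2}) ≥ 3`. -/
theorem no_two_element_tds_G42 (m : ℕ) (hm : 3 ≤ m) :
    (∀ S : Set (V42 m), S.ncard = 2 → ¬ IsTDS (G42 m) S) ∧ 3 ≤ gammaT (G42 m) := by
  have h2m : 0 < 2*m-1 := by omega
  have hU : IsTDS (G42 m) Set.univ := by
    intro v
    cases v with
    | x => exact ⟨.Y ⟨0, h2m⟩, Set.mem_univ _, by simp [adj42, R42]⟩
    | y => exact ⟨.z, Set.mem_univ _, by simp [adj42, R42]⟩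
    | z => exact ⟨.y, Set.mem_univ _, by simp [adj42, R42]⟩
    | Y i => exact ⟨.x, Set.mem_univ _, by simp [adj42, R42]⟩
    | Z i => exact ⟨.x, Set.mem_univ _, by simp [adj42, R42]⟩
  have part1 : ∀ S : Set (V42 m), S.ncard = 2 → ¬ IsTDS (G42 m) S := by
    intro S hS hT
    obtain ⟨a, b, hne, rfl⟩ := Set.ncard_eq_two.mp hS
    obtain ⟨u, hu, hadj⟩ := hT a
    simp only [Set.mem_insert_iff, Set.mem_singleton_iff] at hu
    have hab : (G42 m).Adj a b := by
      rcases hu with rfl | rfl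
      · exact absurd hadj ((G42 m).irrefl)
      · exact hadj
    obtain ⟨v, hva, hvb⟩ := key m hm a b hab
    obtain ⟨w, hw, hadjw⟩ := hT v
    simp only [Set.mem_insert_iff, Set.mem_singleton_iff] at hw
    rcases hw with rfl | rfl
    · exact hva hadjw
    · exact hvb hadjw
  refine ⟨part1, ?_⟩
  apply le_csInf
  · exact ⟨(Set.univ : Set (V42 m)).ncard, Set.univ, hU, rfl⟩
  rintro n ⟨S, hTDS, rfl⟩
  by_contra hlt
  push_neg at hlt
  have hfin : S.Finite := Set.toFinite S
  interval_cases h : S.ncard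
  · rw [Set.ncard_eq_zero hfin] at h
    obtain ⟨u, hu, -⟩ := hTDS .x
    simp [h] at hu
  · obtain ⟨a, ha⟩ := Set.ncard_eq_one.mp h
    obtain ⟨u, hu, hadj⟩ := hTDS a
    rw [ha, Set.mem_singleton_iff] at hu
    subst hu
    exact (G42 m).irrefl hadj
  · exact part1 S h hTDS
end

section
/- For every integer m ≥ 3, the graph G_{4m+2} is a 3-γ_t-critical graph; moreover it has maximum degree Δ(G_{4m+2}) = 4m − 1 and order 4m + 2 = Δ(G_{4m+2}) + 3. -/
open SimpleGraph

/-! No edge of `G_{4m+2}` dominates it: for every edge `ab` some vertex is adjacent to neither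
end, so a total dominating set has at least three vertices, and `{y, z, z₁}` is one. After
deleting any vertex `v`, an explicit pair of adjacent vertices dominates `G_{4m+2} − v`. For the
degrees, `x` is adjacent to everything except `y` and `z`, and every vertex has at least two
non-neighbours besides itself. -/

lemma Nat.eq_mod_iff_of_lt_two_mul {n a b : ℕ} (hb : b < n) (ha : a < 2 * n) :
    b = a % n ↔ b = a ∨ b + n = a := by
  rcases lt_or_ge a n with h | h
  · rw [Nat.mod_eq_of_lt h]; omega
  · rw [Nat.mod_eq_sub_mod h, Nat.mod_eq_of_lt (by omega)]; omega

section TotalDomination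

variable {V : Type*} {G : SimpleGraph V}

lemma isTDS_pair_iff {a b : V} : IsTDS G {a, b} ↔ ∀ v, G.Adj v a ∨ G.Adj v b := by
  simp [IsTDS]

lemma gammaT_eq_of_isTDS {S : Set V} {n : ℕ} (hS : IsTDS G S) (hcard : S.ncard = n)
    (hmin : ∀ T, IsTDS G T → n ≤ T.ncard) : gammaT G = n :=
  le_antisymm (Nat.sInf_le ⟨S, hS, hcard⟩)
    (le_csInf ⟨n, S, hS, hcard⟩ fun _ ⟨T, hT, hTn⟩ => hTn ▸ hmin T hT)

lemma IsTDS.two_le_ncard [Finite V] [Nonempty V] {S : Set V} (hS : IsTDS G S) :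
    2 ≤ S.ncard := by
  obtain ⟨u, hu, -⟩ := hS (Classical.arbitrary V)
  obtain ⟨w, hw, huw⟩ := hS u
  exact (Set.one_lt_ncard_iff).2 ⟨u, w, hu, hw, huw.ne⟩

lemma IsTDS.three_le_ncard [Finite V] [Nonempty V] {S : Set V} (hS : IsTDS G S)
    (hno : ∀ a b, G.Adj a b → ∃ v, ¬ G.Adj v a ∧ ¬ G.Adj v b) : 3 ≤ S.ncard := by
  by_contra! hlt
  have h2 : S.ncard = 2 := by have := hS.two_le_ncard; omega
  obtain ⟨a, b, -, rfl⟩ := Set.ncard_eq_two.1 h2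
  have hdom := isTDS_pair_iff.1 hS
  have hab : G.Adj a b := (hdom a).resolve_left (G.irrefl)
  obtain ⟨v, hva, hvb⟩ := hno a b hab
  exact (hdom v).elim hva hvb

lemma gammaT_eq_two_of_isTDS_pair [Finite V] {a b : V} (h : IsTDS G {a, b}) : gammaT G = 2 :=
  have hab : G.Adj a b := ((isTDS_pair_iff.1 h) a).resolve_left (G.irrefl)
  have : Nonempty V := ⟨a⟩
  gammaT_eq_of_isTDS h (Set.ncard_pair hab.ne) fun _ hT => hT.two_le_ncard

lemma gammaT_delVert_eq_two_of_adj_or_adj [Finite V] {v a b : V} (ha : a ≠ v) (hb : b ≠ v)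
    (h : ∀ w, w ≠ v → G.Adj w a ∨ G.Adj w b) : gammaT (delVert G v) = 2 :=
  gammaT_eq_two_of_isTDS_pair (a := ⟨a, ha⟩) (b := ⟨b, hb⟩)
    (isTDS_pair_iff.2 fun w => h w.1 w.2)

end TotalDomination

section Degree

variable {V : Type*} {G : SimpleGraph V}

lemma deg_add_three_le [Finite V] {v a b : V} (hva : v ≠ a) (hvb : v ≠ b) (hab : a ≠ b)
    (ha : ¬ G.Adj v a) (hb : ¬ G.Adj v b) : deg G v + 3 ≤ Nat.card V := by
  have hsub : ({v, a, b} : Set V) ⊆ (G.neighborSet v)ᶜ := by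
    rintro w (rfl | rfl | rfl) <;> simp_all
  calc deg G v + 3 = (G.neighborSet v).ncard + ({v, a, b} : Set V).ncard := by
        rw [deg, Set.ncard_eq_three.2 ⟨v, a, b, hva, hvb, hab, rfl⟩]
    _ ≤ (G.neighborSet v).ncard + (G.neighborSet v)ᶜ.ncard :=
        Nat.add_le_add_left (Set.ncard_le_ncard hsub) _
    _ = Nat.card V := Set.ncard_add_ncard_compl _

lemma maxDeg_eq_of_forall_deg_le [Fintype V] {n : ℕ} {v : V} (hv : deg G v = n)
    (hle : ∀ w, deg G w ≤ n) : maxDeg G = n :=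
  le_antisymm (Finset.sup_le fun w _ => hle w) (hv ▸ Finset.le_sup (Finset.mem_univ v))

end Degree

namespace V42

variable {m : ℕ}

def equivSum (m : ℕ) : V42 m ≃ Fin 3 ⊕ Fin (2 * m - 1) ⊕ Fin (2 * m) where
  toFun
    | .x => .inl 0
    | .y => .inl 1
    | .z => .inl 2
    | .Y i => .inr (.inl i)
    | .Z i => .inr (.inr i)
  invFun
    | .inl 0 => .x
    | .inl 1 => .y
    | .inl 2 => .z
    | .inr (.inl i) => .Y i
    | .inr (.inr i) => .Z i
  left_inv v := by cases v <;> rfl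
  right_inv s := by
    rcases s with (i | i | i) <;> try fin_cases i
    all_goals rfl

lemma card_eq (hm : 1 ≤ m) : Fintype.card (V42 m) = 4 * m + 2 := by
  rw [Fintype.card_congr (equivSum m)]
  simp only [Fintype.card_sum, Fintype.card_fin]
  omega

end V42

/-- `R42` made symmetric and free of `%`: `yᵢ` is joined to `y_{i ± (m - 1)}`, indices taken
modulo `2m - 1`. -/
def Adj42 (m : ℕ) : V42 m → V42 m → Prop
  | .x, .Y _ | .Y _, .x | .x, .Z _ | .Z _, .x | .y, .Y _ | .Y _, .y
  | .y, .z | .z, .y | .z, .Z _ | .Z _, .z => True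
  | .Y i, .Y j => i ≠ j ∧ (j.val + 1 = i.val + m ∨ j.val + m = i.val ∨
      i.val + 1 = j.val + m ∨ i.val + m = j.val)
  | .Z i, .Z j => i ≠ j ∧ j.val ≠ i.val + m ∧ i.val ≠ j.val + m
  | .Y i, .Z j | .Z j, .Y i => j.val ≠ i.val ∧ j.val ≠ i.val + 1
  | _, _ => False

variable {m : ℕ} in
lemma G42.adj_iff {a b : V42 m} : (G42 m).Adj a b ↔ Adj42 m a b := by
  cases a <;> cases b
  case Y.Y i j =>
    simp only [G42, fromRel_adj, R42, Adj42, ne_eq, V42.Y.injEq,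
      Nat.eq_mod_iff_of_lt_two_mul j.isLt (by omega : (i : ℕ) + m - 1 < 2 * (2 * m - 1)),
      Nat.eq_mod_iff_of_lt_two_mul i.isLt (by omega : (j : ℕ) + m - 1 < 2 * (2 * m - 1)), Fin.ext_iff]
    omega
  case Z.Z i j =>
    simp only [G42, fromRel_adj, R42, Adj42, ne_eq, V42.Z.injEq, Fin.ext_iff]
    omega
  all_goals simp [G42, R42, Adj42]

namespace Adj42

variable {m : ℕ}

lemma exists_not_adj_Y_Z (i : Fin (2 * m - 1)) (j : Fin (2 * m)) :
    ∃ w, ¬ Adj42 m w (.Y i) ∧ ¬ Adj42 m w (.Z j) := by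
  -- `zⱼ` misses exactly `y_{j-1}` and `yⱼ`, while the two `Y`-neighbours of `yᵢ` have the
  -- consecutive indices `i - m`, `i - m + 1` (mod `2m - 1`). So `y_{j-1}` or `yⱼ` works unless
  -- `j ≡ i - m + 1`, and then `zⱼ` is opposite (index differing by `m`) to `zᵢ` or `z_{i+1}`.
  by_cases h₁ : (j : ℕ) = i + m ∨ (j : ℕ) + m = i
  · exact ⟨.Z ⟨i, by omega⟩, by simp [Adj42, Fin.ext_iff]; omega⟩
  by_cases h₂ : (j : ℕ) = i + 1 + m ∨ (j : ℕ) + m = i + 1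
  · exact ⟨.Z ⟨i + 1, by omega⟩, by simp [Adj42, Fin.ext_iff]; omega⟩
  by_cases h₃ : Adj42 m (.Y ⟨min j (2 * m - 2), by omega⟩) (.Y i)
  · refine ⟨.Y ⟨j - 1, by omega⟩, ?_⟩
    simp [Adj42, Fin.ext_iff] at h₃ ⊢
    omega
  · exact ⟨_, h₃, by simp [Adj42]; omega⟩

lemma exists_not_adj_of_adj {a b : V42 m} (hab : Adj42 m a b) :
    ∃ w, ¬ Adj42 m w a ∧ ¬ Adj42 m w b := by
  cases a <;> cases b <;> simp only [Adj42] at hab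
  case x.Y | Y.x | Y.Y => exact ⟨.z, by simp [Adj42]⟩
  case x.Z | Z.x | Z.Z => exact ⟨.y, by simp [Adj42]⟩
  case y.z | z.y => exact ⟨.x, by simp [Adj42]⟩
  case y.Y i | Y.y i => exact ⟨.Z ⟨i, by omega⟩, by simp [Adj42]⟩
  case z.Z j | Z.z j => exact ⟨.Y ⟨min j (2 * m - 2), by omega⟩, by simp [Adj42]; omega⟩
  case Y.Z i j => exact exists_not_adj_Y_Z i j
  case Z.Y j i => exact (exists_not_adj_Y_Z i j).imp fun _ => And.symm

lemma exists_dominating_pair (hm : 3 ≤ m) (v : V42 m) :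
    ∃ a b, a ≠ v ∧ b ≠ v ∧ ∀ w, w ≠ v → Adj42 m w a ∨ Adj42 m w b := by
  rcases v with _ | _ | _ | i | i
  case' x => refine ⟨.y, .z, ?_⟩
  case' y => refine ⟨.Z ⟨0, by omega⟩, .Z ⟨2, by omega⟩, ?_⟩
  case' z => refine ⟨.x, .Y ⟨0, by omega⟩, ?_⟩
  case' Y => rcases le_or_gt (i : ℕ) m with hi | hi
  case' Y.inl => refine ⟨.Y ⟨i + m - 2, by omega⟩, .Z ⟨i, by omega⟩, ?_⟩
  case' Y.inr => refine ⟨.Y ⟨i - m + 2, by omega⟩, .Z ⟨i + 1, by omega⟩, ?_⟩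
  case' Z => rcases lt_trichotomy (i : ℕ) m with hi | hi | hi
  case' Z.inl => refine ⟨.Y ⟨i, by omega⟩, .Z ⟨i + m, by omega⟩, ?_⟩
  case' Z.inr.inl => refine ⟨.Y ⟨m, by omega⟩, .Z ⟨0, by omega⟩, ?_⟩
  case' Z.inr.inr => refine ⟨.Y ⟨i - 1, by omega⟩, .Z ⟨i - m, by omega⟩, ?_⟩
  all_goals
    refine ⟨by simp [Fin.ext_iff] <;> omega, by simp [Fin.ext_iff] <;> omega, ?_⟩
    rintro (_ | _ | _ | l | l) hw <;> simp [Adj42, Fin.ext_iff] at hw ⊢ <;> omega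

lemma exists_two_not_adj (hm : 1 ≤ m) (v : V42 m) :
    ∃ a b, v ≠ a ∧ v ≠ b ∧ a ≠ b ∧ ¬ Adj42 m v a ∧ ¬ Adj42 m v b := by
  rcases v with _ | _ | _ | i | i
  case' x => refine ⟨.y, .z, ?_⟩
  case' y => refine ⟨.x, .Z ⟨0, by omega⟩, ?_⟩
  case' z => refine ⟨.x, .Y ⟨0, by omega⟩, ?_⟩
  case' Y => refine ⟨.Z ⟨i, by omega⟩, .Z ⟨i + 1, by omega⟩, ?_⟩
  case' Z => refine ⟨.y, .Y ⟨min i (2 * m - 2), by omega⟩, ?_⟩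
  all_goals simp [Adj42, Fin.ext_iff] <;> omega

end Adj42

namespace G42

variable {m : ℕ}

lemma gammaT_eq_three (hm : 1 ≤ m) : gammaT (G42 m) = 3 := by
  have : Nonempty (V42 m) := ⟨.x⟩
  refine gammaT_eq_of_isTDS (S := {.y, .z, .Z ⟨0, by omega⟩}) ?_ ?_ fun T hT => ?_
  · rintro (_ | _ | _ | i | i) <;> simp [adj_iff, Adj42]
  · exact Set.ncard_eq_three.2 ⟨_, _, _, by simp, by simp, by simp, rfl⟩
  · refine hT.three_le_ncard fun a b hab => ?_
    simpa only [adj_iff] using Adj42.exists_not_adj_of_adj (adj_iff.1 hab)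

lemma gammaT_delVert_eq_two (hm : 3 ≤ m) (v : V42 m) : gammaT (delVert (G42 m) v) = 2 := by
  obtain ⟨a, b, ha, hb, hdom⟩ := Adj42.exists_dominating_pair hm v
  exact gammaT_delVert_eq_two_of_adj_or_adj ha hb fun w hw => by simpa only [adj_iff] using hdom w hw

lemma deg_x (hm : 1 ≤ m) : deg (G42 m) .x = 4 * m - 1 := by
  have hN : (G42 m).neighborSet .x = {.x, .y, .z}ᶜ := by
    ext (_ | _ | _ | _ | _) <;> simp [adj_iff, Adj42]
  rw [deg, hN, Set.ncard_compl, Set.ncard_eq_three.2 ⟨_, _, _, by simp, by simp, by simp, rfl⟩,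
    Nat.card_eq_fintype_card, V42.card_eq hm]
  omega

lemma deg_le (hm : 1 ≤ m) (v : V42 m) : deg (G42 m) v ≤ 4 * m - 1 := by
  obtain ⟨a, b, hva, hvb, hab, ha, hb⟩ := Adj42.exists_two_not_adj hm v
  have := deg_add_three_le hva hvb hab (mt adj_iff.1 ha) (mt adj_iff.1 hb)
  rw [Nat.card_eq_fintype_card, V42.card_eq hm] at this
  omega

lemma maxDeg_eq (hm : 1 ≤ m) : maxDeg (G42 m) = 4 * m - 1 :=
  maxDeg_eq_of_forall_deg_le (deg_x hm) (deg_le hm)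

end G42

/-- Theorem 2.5: `G_{4m+2}` is a 3-γₜ-critical graph with `Δ = 4m − 1` and order
`4m + 2 = Δ + 3`, for every `m ≥ 3`. -/
theorem G42_is_critical (m : ℕ) (hm : 3 ≤ m) :
    IsThreeGammaTCritical (G42 m) ∧ maxDeg (G42 m) = 4 * m - 1 ∧
      Fintype.card (V42 m) = 4 * m + 2 ∧ Fintype.card (V42 m) = maxDeg (G42 m) + 3 := by
  have hm₁ : 1 ≤ m := by omega
  refine ⟨⟨G42.gammaT_eq_three hm₁, fun v _ => G42.gammaT_delVert_eq_two hm v⟩,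
    G42.maxDeg_eq hm₁, V42.card_eq hm₁, ?_⟩
  rw [V42.card_eq hm₁, G42.maxDeg_eq hm₁]
  omega
end

section
/- For every integer m ≥ 3 and every vertex v of G_{4m}, the total domination number of the vertex-deleted graph satisfies γ_t(G_{4m} − v) = 2. -/
open SimpleGraph

/-- Vertices of `G_{4m}`: `x, y, z`, `y₁,…,y_{2m−2}` and `z₁,…,z_{2m−1}`;
`Y i` stands for `y_{i+1}` and `Z i` for `z_{i+1}` (0-based `Fin` indices). -/
inductive V40 (m : ℕ) : Type
  | x : V40 m
  | y : V40 m
  | z : V40 m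
  | Y : Fin (2 * m - 2) → V40 m
  | Z : Fin (2 * m - 1) → V40 m
  deriving DecidableEq, Fintype

/-- Base edge relation of `G_{4m}` (the paper's 1-based indices are shifted down by 1):
`x yᵢ`, `x zᵢ`, `y yᵢ`, `y z`, `z zᵢ`, `yᵢ yⱼ` for `i < j`, `j ≠ i + m − 1`,
`zᵢ z_{1+((i+m−2) mod (2m−1))}`, `yᵢ zⱼ` for `j ≠ i`, `j ≠ i + 1`, and the extra edge `y₁ z₂`. -/
def R40 (m : ℕ) : V40 m → V40 m → Prop
  | .x, .Y _ => True
  | .x, .Z _ => True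
  | .y, .Y _ => True
  | .y, .z => True
  | .z, .Z _ => True
  | .Y i, .Y j => i.val < j.val ∧ j.val ≠ i.val + m - 1
  | .Z i, .Z j => j.val = (i.val + m - 1) % (2 * m - 1)
  | .Y i, .Z j => (j.val ≠ i.val ∧ j.val ≠ i.val + 1) ∨ (i.val = 0 ∧ j.val = 1)
  | _, _ => False

/-- The graph `G_{4m}`. -/
def G40 (m : ℕ) : SimpleGraph (V40 m) := SimpleGraph.fromRel (R40 m)

namespace TDAux
open V40

variable {m : ℕ}

lemma mod_char (a b : ℕ) (h : a < 2*b) : a % b = a ∨ a % b + b = a := by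
  rcases Nat.lt_or_ge a b with h1 | h1
  · left; exact Nat.mod_eq_of_lt h1
  · right
    have hb : 0 < b := by omega
    have : a % b = a - b := by
      rw [Nat.mod_eq_sub_mod h1, Nat.mod_eq_of_lt (by omega)]
    omega

lemma adj_xY (i : Fin (2*m-2)) : (G40 m).Adj .x (.Y i) := by
  rw [G40, SimpleGraph.fromRel_adj]
  exact ⟨by simp, Or.inl trivial⟩

lemma adj_xZ (i : Fin (2*m-1)) : (G40 m).Adj .x (.Z i) := by
  rw [G40, SimpleGraph.fromRel_adj]
  exact ⟨by simp, Or.inl trivial⟩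

lemma adj_yY (i : Fin (2*m-2)) : (G40 m).Adj .y (.Y i) := by
  rw [G40, SimpleGraph.fromRel_adj]
  exact ⟨by simp, Or.inl trivial⟩

lemma adj_yz : (G40 m).Adj .y .z := by
  rw [G40, SimpleGraph.fromRel_adj]
  exact ⟨by simp, Or.inl trivial⟩

lemma adj_zZ (i : Fin (2*m-1)) : (G40 m).Adj .z (.Z i) := by
  rw [G40, SimpleGraph.fromRel_adj]
  exact ⟨by simp, Or.inl trivial⟩

lemma adjYY (i j : Fin (2*m-2)) (h1 : i.val ≠ j.val)
    (h2 : i.val + m ≠ j.val + 1) (h3 : j.val + m ≠ i.val + 1) :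
    (G40 m).Adj (.Y i) (.Y j) := by
  rw [G40, SimpleGraph.fromRel_adj]
  have hij : i ≠ j := fun h => h1 (by rw [h])
  refine ⟨by simpa using hij, ?_⟩
  rcases Nat.lt_or_ge i.val j.val with h | h
  · left; exact ⟨h, by omega⟩
  · right; exact ⟨by omega, by omega⟩

lemma adjYZ (i : Fin (2*m-2)) (j : Fin (2*m-1))
    (h : (j.val ≠ i.val ∧ j.val ≠ i.val + 1) ∨ (i.val = 0 ∧ j.val = 1)) :
    (G40 m).Adj (.Y i) (.Z j) := by
  rw [G40, SimpleGraph.fromRel_adj]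
  exact ⟨by simp, Or.inl h⟩

lemma adjZZ (hm : 3 ≤ m) (i j : Fin (2*m-1))
    (h : i.val + m = j.val + 1 ∨ j.val + m = i.val + 1 ∨
      i.val + m = j.val + 2*m ∨ j.val + m = i.val + 2*m) :
    (G40 m).Adj (.Z i) (.Z j) := by
  rw [G40, SimpleGraph.fromRel_adj]
  have hi := i.isLt
  have hj := j.isLt
  have hij : i.val ≠ j.val := by omega
  refine ⟨by simp [Fin.ext_iff]; omega, ?_⟩
  rcases h with h | h | h | h
  · left; show j.val = (i.val + m - 1) % (2*m-1)
    rw [Nat.mod_eq_of_lt (by omega)]; omega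
  · right; show i.val = (j.val + m - 1) % (2*m-1)
    rw [Nat.mod_eq_of_lt (by omega)]; omega
  · left; show j.val = (i.val + m - 1) % (2*m-1)
    have he : i.val + m - 1 = j.val + (2*m-1) := by omega
    rw [he, Nat.add_mod_right, Nat.mod_eq_of_lt (by omega)]
  · right; show i.val = (j.val + m - 1) % (2*m-1)
    have he : j.val + m - 1 = i.val + (2*m-1) := by omega
    rw [he, Nat.add_mod_right, Nat.mod_eq_of_lt (by omega)]

end TDAux

namespace TDAux

lemma two_le_tds {W : Type*} [Finite W] (G : SimpleGraph W) (S : Set W) (w0 : W)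
    (h : IsTDS G S) : 2 ≤ S.ncard := by
  obtain ⟨u, hu, hadj⟩ := h w0
  obtain ⟨w, hw, hadj2⟩ := h u
  have hne : u ≠ w := by rintro rfl; exact G.irrefl hadj2
  have hsub : ({u, w} : Set W) ⊆ S := by
    intro t ht
    rcases ht with rfl | ht
    · exact hu
    · rcases ht with rfl; exact hw
  calc 2 = ({u, w} : Set W).ncard := (Set.ncard_pair hne).symm
    _ ≤ S.ncard := Set.ncard_le_ncard hsub (Set.toFinite S)

lemma main_aux {m : ℕ} (hm : 3 ≤ m) (v a b : V40 m) (w0 : V40 m) (hw0 : w0 ≠ v)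
    (hav : a ≠ v) (hbv : b ≠ v) (hab : a ≠ b)
    (hcov : ∀ w : V40 m, w ≠ v → (G40 m).Adj w a ∨ (G40 m).Adj w b) :
    gammaT (delVert (G40 m) v) = 2 := by
  have h2 : ∃ S : Set {u : V40 m // u ≠ v}, IsTDS (delVert (G40 m) v) S ∧ S.ncard = 2 := by
    refine ⟨{⟨a, hav⟩, ⟨b, hbv⟩}, ?_, ?_⟩
    · rintro ⟨w, hw⟩
      rcases hcov w hw with h | h
      · exact ⟨⟨a, hav⟩, Or.inl rfl, h⟩
      · exact ⟨⟨b, hbv⟩, Or.inr rfl, h⟩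
    · exact Set.ncard_pair (by simpa [Subtype.mk.injEq] using hab)
  refine le_antisymm (Nat.sInf_le h2) (le_csInf ⟨2, h2⟩ ?_)
  rintro n ⟨S, hS, rfl⟩
  exact two_le_tds _ S ⟨w0, hw0⟩ hS

end TDAux

open TDAux V40

/-- Lemma 2.7: `γₜ(G_{4m} − v) = 2` for every vertex `v` and every `m ≥ 3`. -/
theorem gammaT_G40_delete (m : ℕ) (hm : 3 ≤ m) (v : V40 m) :
    gammaT (delVert (G40 m) v) = 2 := by
  cases v with
  | x =>
    refine main_aux hm _ V40.y V40.z V40.y (by simp) (by simp) (by simp) (by simp) ?_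
    intro w hw
    cases w with
    | x => exact absurd rfl hw
    | y => exact Or.inr adj_yz
    | z => exact Or.inl adj_yz.symm
    | Y l => exact Or.inl (adj_yY l).symm
    | Z l => exact Or.inr (adj_zZ l).symm
  | y =>
    refine main_aux hm _ V40.x (V40.Z ⟨0, by omega⟩) V40.x (by simp) (by simp) (by simp) (by simp) ?_
    intro w hw
    cases w with
    | x => exact Or.inr (adj_xZ _)
    | y => exact absurd rfl hw
    | z => exact Or.inr (adj_zZ _)
    | Y l => exact Or.inl (adj_xY l).symm
    | Z l => exact Or.inl (adj_xZ l).symm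
  | z =>
    refine main_aux hm _ V40.x (V40.Y ⟨0, by omega⟩) V40.x (by simp) (by simp) (by simp) (by simp) ?_
    intro w hw
    cases w with
    | x => exact Or.inr (adj_xY _)
    | y => exact Or.inr (adj_yY _)
    | z => exact absurd rfl hw
    | Y l => exact Or.inl (adj_xY l).symm
    | Z l => exact Or.inl (adj_xZ l).symm
  | Y i =>
    have hi := i.isLt
    obtain ⟨J, hJ⟩ : ∃ J : Fin (2*m-2), J.val = i.val + m - 1 ∨ J.val + (2*m-2) = i.val + m - 1 :=
      ⟨⟨_, Nat.mod_lt _ (by omega)⟩, mod_char _ _ (by omega)⟩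
    have hJlt := J.isLt
    obtain ⟨K, hK⟩ : ∃ K : Fin (2*m-1), K.val = J.val + m ∨ K.val + (2*m-1) = J.val + m :=
      ⟨⟨_, Nat.mod_lt _ (by omega)⟩, mod_char _ _ (by omega)⟩
    have hKlt := K.isLt
    refine main_aux hm _ (V40.Y J) (V40.Z K) V40.x (by simp) ?_ (by simp) (by simp) ?_
    · simp only [ne_eq, V40.Y.injEq]
      intro h
      exact absurd (congrArg Fin.val h) (by omega)
    · intro w hw
      cases w with
      | x => exact Or.inl (adj_xY _)
      | y => exact Or.inl (adj_yY _)
      | z => exact Or.inr (adj_zZ _)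
      | Y l =>
        have hll := l.isLt
        have hl : l.val ≠ i.val := by
          intro h; exact hw (by rw [show l = i from Fin.ext h])
        by_cases hlj : l.val = J.val
        · exact Or.inr (adjYZ l K (Or.inl ⟨by omega, by omega⟩))
        · exact Or.inl (adjYY l J hlj (by omega) (by omega))
      | Z l =>
        have hll := l.isLt
        by_cases h1 : l.val = J.val ∨ l.val = J.val + 1
        · exact Or.inr (adjZZ hm l K (by omega))
        · exact Or.inl (adjYZ J l (Or.inl ⟨by omega, by omega⟩)).symm
  | Z i =>
    have hi := i.isLt
    have htri : i.val + 2 ≤ m ∨ i.val + 1 = m ∨ m ≤ i.val := by omega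
    rcases htri with hA | hB | hC
    · -- i ≤ m - 2
      obtain ⟨J, hJ⟩ : ∃ J : Fin (2*m-2), J.val = i.val := ⟨⟨i.val, by omega⟩, rfl⟩
      have hJlt := J.isLt
      obtain ⟨K, hK⟩ : ∃ K : Fin (2*m-1), K.val = i.val + m + 1 ∨ K.val + (2*m-1) = i.val + m + 1 :=
        ⟨⟨_, Nat.mod_lt _ (by omega)⟩, mod_char _ _ (by omega)⟩
      have hKlt := K.isLt
      refine main_aux hm _ (V40.Y J) (V40.Z K) V40.x (by simp) (by simp) ?_ (by simp) ?_
      · simp only [ne_eq, V40.Z.injEq]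
        intro h
        exact absurd (congrArg Fin.val h) (by omega)
      · intro w hw
        cases w with
        | x => exact Or.inl (adj_xY _)
        | y => exact Or.inl (adj_yY _)
        | z => exact Or.inr (adj_zZ _)
        | Y l =>
          have hll := l.isLt
          by_cases hc : l.val = i.val ∨ l.val + 1 = i.val + m
          · exact Or.inr (adjYZ l K (Or.inl ⟨by omega, by omega⟩))
          · exact Or.inl (adjYY l J (by omega) (by omega) (by omega))
        | Z l =>
          have hll := l.isLt
          have hl : l.val ≠ i.val := by
            intro h; exact hw (by rw [show l = i from Fin.ext h])
          by_cases hc : l.val = i.val + 1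
          · exact Or.inr (adjZZ hm l K (by omega))
          · exact Or.inl (adjYZ J l (Or.inl ⟨by omega, by omega⟩)).symm
    · -- i = m - 1
      obtain ⟨J, hJ⟩ : ∃ J : Fin (2*m-2), J.val + 1 = m :=
        ⟨⟨m-1, by omega⟩, show m - 1 + 1 = m by omega⟩
      have hJlt := J.isLt
      obtain ⟨K, hK⟩ : ∃ K : Fin (2*m-1), K.val = 1 := ⟨⟨1, by omega⟩, rfl⟩
      have hKlt := K.isLt
      refine main_aux hm _ (V40.Y J) (V40.Z K) V40.x (by simp) (by simp) ?_ (by simp) ?_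
      · simp only [ne_eq, V40.Z.injEq]
        intro h
        exact absurd (congrArg Fin.val h) (by omega)
      · intro w hw
        cases w with
        | x => exact Or.inl (adj_xY _)
        | y => exact Or.inl (adj_yY _)
        | z => exact Or.inr (adj_zZ _)
        | Y l =>
          have hll := l.isLt
          by_cases h0 : l.val = 0
          · exact Or.inr (adjYZ l K (Or.inr ⟨h0, hK⟩))
          · by_cases h1 : l.val + 1 = m
            · exact Or.inr (adjYZ l K (Or.inl ⟨by omega, by omega⟩))
            · exact Or.inl (adjYY l J (by omega) (by omega) (by omega))
        | Z l =>
          have hll := l.isLt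
          have hl : l.val ≠ i.val := by
            intro h; exact hw (by rw [show l = i from Fin.ext h])
          by_cases hc : l.val = m
          · exact Or.inr (adjZZ hm l K (by omega))
          · exact Or.inl (adjYZ J l (Or.inl ⟨by omega, by omega⟩)).symm
    · -- i ≥ m
      obtain ⟨J, hJ⟩ : ∃ J : Fin (2*m-2), J.val + 1 = i.val :=
        ⟨⟨i.val - 1, by omega⟩, show i.val - 1 + 1 = i.val by omega⟩
      have hJlt := J.isLt
      obtain ⟨K, hK⟩ : ∃ K : Fin (2*m-1), K.val = i.val + m - 2 ∨ K.val + (2*m-1) = i.val + m - 2 :=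
        ⟨⟨_, Nat.mod_lt _ (by omega)⟩, mod_char _ _ (by omega)⟩
      have hKlt := K.isLt
      refine main_aux hm _ (V40.Y J) (V40.Z K) V40.x (by simp) (by simp) ?_ (by simp) ?_
      · simp only [ne_eq, V40.Z.injEq]
        intro h
        exact absurd (congrArg Fin.val h) (by omega)
      · intro w hw
        cases w with
        | x => exact Or.inl (adj_xY _)
        | y => exact Or.inl (adj_yY _)
        | z => exact Or.inr (adj_zZ _)
        | Y l =>
          have hll := l.isLt
          by_cases hc : l.val + 1 = i.val ∨ l.val + m = i.val
          · exact Or.inr (adjYZ l K (Or.inl ⟨by omega, by omega⟩))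
          · exact Or.inl (adjYY l J (by omega) (by omega) (by omega))
        | Z l =>
          have hll := l.isLt
          have hl : l.val ≠ i.val := by
            intro h; exact hw (by rw [show l = i from Fin.ext h])
          by_cases hc : l.val + 1 = i.val
          · exact Or.inr (adjZZ hm l K (by omega))
          · exact Or.inl (adjYZ J l (Or.inl ⟨by omega, by omega⟩)).symm
end

section
/- Let G be a connected 3-γ_t-critical graph of order Δ(G) + 3 with Δ(G) ≥ 3; let x be a vertex of degree Δ(G), and let y and z be the two vertices of G lying outside the closed neighborhood of x. Then there exist vertices u ∈ N(y) \ {z} and w ∈ N(z) \ {y} such that uw is an edge of G. -/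
open SimpleGraph

private lemma walk_closed {V : Type*} (G : SimpleGraph V) (S : Set V)
    (hS : ∀ u v : V, u ∈ S → G.Adj u v → v ∈ S) :
    ∀ {a b : V}, G.Walk a b → a ∈ S → b ∈ S := by
  intro a b p
  induction p with
  | nil => exact id
  | cons h _ ih => exact fun ha => ih (hS _ _ ha h)

/-- Observation 2.9(a): some vertex of `N(y) \ {z}` is adjacent to some vertex of `N(z) \ {y}`. -/
theorem exists_adjacent_pair {V : Type*} [Fintype V] (G : SimpleGraph V)
    (hconn : G.Connected) (hcrit : IsThreeGammaTCritical G)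
    (horder : Fintype.card V = maxDeg G + 3) (hΔ : 3 ≤ maxDeg G)
    (x y z : V) (hx : deg G x = maxDeg G) (hyz : y ≠ z)
    (hyx : y ≠ x) (hyN : y ∉ G.neighborSet x)
    (hzx : z ≠ x) (hzN : z ∉ G.neighborSet x) :
    ∃ u w : V, G.Adj y u ∧ u ≠ z ∧ G.Adj z w ∧ w ≠ y ∧ G.Adj u w := by
  classical
  have hxy : ¬ G.Adj x y := fun h => hyN h
  have hxz : ¬ G.Adj x z := fun h => hzN h
  have hG3 : gammaT G = 3 := hcrit.1
  -- L1 : there is no 2-element total dominating set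
  have L1 : ∀ p q : V, ∃ v : V, ¬ G.Adj v p ∧ ¬ G.Adj v q := by
    intro p q
    by_contra h
    push_neg at h
    have hT : IsTDS G {p, q} := by
      intro w
      by_cases h1 : G.Adj w p
      · exact ⟨p, by simp, h1⟩
      · exact ⟨q, by simp, h w h1⟩
    have hle : gammaT G ≤ ({p, q} : Set V).ncard := Nat.sInf_le ⟨{p, q}, hT, rfl⟩
    have h2 : ({p, q} : Set V).ncard ≤ 2 := by
      refine le_trans (Set.ncard_insert_le _ _) ?_
      simp
    rw [hG3] at hle
    omega
  -- the neighbor finset of x has maxDeg G elements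
  have hnfin : (G.neighborFinset x).card = maxDeg G := by
    rw [neighborFinset_def, ← Set.ncard_eq_toFinset_card']
    exact hx
  -- L0 : every vertex other than x, y, z is a neighbor of x
  have L0 : ∀ v : V, v ≠ x → v ≠ y → v ≠ z → G.Adj x v := by
    have hcard3 : ({x, y, z} : Finset V).card = 3 :=
      Finset.card_eq_three.mpr ⟨x, y, z, Ne.symm hyx, Ne.symm hzx, hyz, rfl⟩
    have hdisj : Disjoint (G.neighborFinset x) ({x, y, z} : Finset V) := by
      rw [Finset.disjoint_left]
      intro a ha hb
      rw [mem_neighborFinset] at ha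
      simp only [Finset.mem_insert, Finset.mem_singleton] at hb
      rcases hb with rfl | rfl | rfl
      · exact G.irrefl ha
      · exact hxy ha
      · exact hxz ha
    have hcardU : (G.neighborFinset x ∪ {x, y, z}).card = Fintype.card V := by
      rw [Finset.card_union_of_disjoint hdisj, hnfin, hcard3, horder]
    have huniv : (G.neighborFinset x ∪ ({x, y, z} : Finset V)) = Finset.univ :=
      Finset.eq_univ_of_card _ hcardU
    intro v hvx hvy hvz
    have hmem : v ∈ G.neighborFinset x ∪ ({x, y, z} : Finset V) := by
      rw [huniv]; exact Finset.mem_univ v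
    rcases Finset.mem_union.mp hmem with h | h
    · exact (mem_neighborFinset G x v).mp h
    · simp only [Finset.mem_insert, Finset.mem_singleton] at h
      rcases h with rfl | rfl | rfl
      · exact absurd rfl hvx
      · exact absurd rfl hvy
      · exact absurd rfl hvz
  -- L2 : y and z have no common neighbor
  have L2 : ∀ c : V, G.Adj y c → G.Adj z c → False := by
    intro c hyc hzc
    obtain ⟨w', h1, h2⟩ := L1 x c
    have hcx : c ≠ x := by rintro rfl; exact hxy hyc.symm
    have hcy : c ≠ y := hyc.ne'
    have hcz : c ≠ z := hzc.ne'
    by_cases hwx : w' = x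
    · subst hwx; exact h2 (L0 c hcx hcy hcz)
    by_cases hwy : w' = y
    · subst hwy; exact h2 hyc
    by_cases hwz : w' = z
    · subst hwz; exact h2 hzc
    · exact h1 (L0 w' hwx hwy hwz).symm
  -- a vertex with two distinct neighbors has degree ≠ 1
  have deg_ge2 : ∀ u a b : V, G.Adj u a → G.Adj u b → a ≠ b → deg G u ≠ 1 := by
    intro u a b h1 h2 hab hdeg
    obtain ⟨c, hc⟩ := Set.ncard_eq_one.mp hdeg
    have ha : a ∈ G.neighborSet u := h1
    have hb : b ∈ G.neighborSet u := h2
    rw [hc] at ha hb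
    exact hab (ha.trans hb.symm)
  -- a degree-one vertex adjacent to some w ≠ x must be y or z
  have deg_C : ∀ u w : V, G.Adj w u → w ≠ x → deg G u = 1 → u = y ∨ u = z := by
    intro u w hwu hwx h1
    by_cases hy' : u = y
    · exact Or.inl hy'
    by_cases hz' : u = z
    · exact Or.inr hz'
    by_cases hux : u = x
    · subst hux; rw [hx] at h1; omega
    · exact absurd h1 (deg_ge2 u x w (L0 u hux hy' hz').symm hwu.symm (Ne.symm hwx))
  -- extracting a dominating pair from criticality
  have pair_of : ∀ v : V, (¬ ∃ u : V, G.Adj v u ∧ deg G u = 1) →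
      ∃ p q : V, p ≠ v ∧ q ≠ v ∧ G.Adj p q ∧
        ∀ w : V, w ≠ v → G.Adj w p ∨ G.Adj w q := by
    intro v hv
    have h2 := hcrit.2 v hv
    have hne : {n : ℕ | ∃ S : Set {u : V // u ≠ v},
        IsTDS (delVert G v) S ∧ S.ncard = n}.Nonempty := by
      by_contra hh
      rw [Set.not_nonempty_iff_eq_empty] at hh
      have h0 : gammaT (delVert G v) = 0 := by
        rw [gammaT, hh, Nat.sInf_empty]
      omega
    have hmem : gammaT (delVert G v) ∈ {n : ℕ | ∃ S : Set {u : V // u ≠ v},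
        IsTDS (delVert G v) S ∧ S.ncard = n} := Nat.sInf_mem hne
    rw [h2] at hmem
    obtain ⟨S, hS, hS2⟩ := hmem
    obtain ⟨p, q, hpq0, rfl⟩ := Set.ncard_eq_two.mp hS2
    have adjpq : G.Adj (↑p) (↑q) := by
      obtain ⟨u, hu, hadj⟩ := hS p
      simp only [Set.mem_insert_iff, Set.mem_singleton_iff] at hu
      rcases hu with rfl | rfl
      · exact absurd hadj (delVert G v).irrefl
      · exact hadj
    refine ⟨↑p, ↑q, p.2, q.2, adjpq, ?_⟩
    intro w hw
    obtain ⟨u, hu, hadj⟩ := hS ⟨w, hw⟩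
    simp only [Set.mem_insert_iff, Set.mem_singleton_iff] at hu
    rcases hu with rfl | rfl
    · exact Or.inl hadj
    · exact Or.inr hadj
  -- y has a neighbor
  have yhasnbr : ∃ c : V, G.Adj y c := by
    obtain ⟨p⟩ := hconn.preconnected y x
    cases p with
    | nil => exact absurd rfl hyx
    | cons h _ => exact ⟨_, h⟩
  have zhasnbr : ∃ c : V, G.Adj z c := by
    obtain ⟨p⟩ := hconn.preconnected z x
    cases p with
    | nil => exact absurd rfl hzx
    | cons h _ => exact ⟨_, h⟩
  -- N(y) \ {z} is nonempty
  have hAne : ∃ a : V, G.Adj y a ∧ a ≠ z := by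
    by_contra h
    push_neg at h
    have hyz' : G.Adj y z := by
      obtain ⟨c, hc⟩ := yhasnbr
      rwa [h c hc] at hc
    have hz2 : ∃ a : V, G.Adj z a ∧ a ≠ y := by
      by_contra h2
      push_neg at h2
      have hcl : ∀ u w : V, u ∈ ({y, z} : Set V) → G.Adj u w → w ∈ ({y, z} : Set V) := by
        rintro u w hu hadj
        simp only [Set.mem_insert_iff, Set.mem_singleton_iff] at hu ⊢
        rcases hu with rfl | rfl
        · exact Or.inr (h w hadj)
        · exact Or.inl (h2 w hadj)
      have hxin : x ∈ ({y, z} : Set V) :=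
        walk_closed G {y, z} hcl (hconn.preconnected y x).some (by simp)
      simp only [Set.mem_insert_iff, Set.mem_singleton_iff] at hxin
      rcases hxin with h' | h'
      · exact hyx h'.symm
      · exact hzx h'.symm
    obtain ⟨a, hza, hay⟩ := hz2
    have hax : a ≠ x := by rintro rfl; exact hxz hza.symm
    have haz : a ≠ z := hza.ne'
    have hca : ¬ ∃ u : V, G.Adj a u ∧ deg G u = 1 := by
      rintro ⟨u, hau, hu1⟩
      rcases deg_C u a hau hax hu1 with h' | h'
      · rw [h'] at hau
        exact haz (h a hau.symm)
      · rw [h'] at hu1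
        exact deg_ge2 z y a hyz'.symm hza (Ne.symm hay) hu1
    obtain ⟨p, q, hpa, hqa, hpq, hdom⟩ := pair_of a hca
    have contra : ∀ c : V, c = p ∨ c = q → G.Adj y c → False := by
      rintro c hc hyc
      have hcz : c = z := h c hyc
      obtain ⟨w', hw1, hw2⟩ := L1 p q
      by_cases hwa : w' = a
      · subst hwa
        rcases hc with rfl | rfl
        · exact hw1 (by rw [hcz]; exact hza.symm)
        · exact hw2 (by rw [hcz]; exact hza.symm)
      · rcases hdom w' hwa with h' | h'
        · exact hw1 h'
        · exact hw2 h'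
    rcases hdom y (Ne.symm hay) with h' | h'
    · exact contra p (Or.inl rfl) h'
    · exact contra q (Or.inr rfl) h'
  -- N(z) \ {y} is nonempty
  have hBne : ∃ b : V, G.Adj z b ∧ b ≠ y := by
    by_contra h
    push_neg at h
    have hzy' : G.Adj z y := by
      obtain ⟨c, hc⟩ := zhasnbr
      rwa [h c hc] at hc
    obtain ⟨a, hya, haz⟩ := hAne
    have hax : a ≠ x := by rintro rfl; exact hxy hya.symm
    have hay : a ≠ y := hya.ne'
    have hca : ¬ ∃ u : V, G.Adj a u ∧ deg G u = 1 := by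
      rintro ⟨u, hau, hu1⟩
      rcases deg_C u a hau hax hu1 with h' | h'
      · rw [h'] at hu1
        exact deg_ge2 y z a hzy'.symm hya (Ne.symm haz) hu1
      · rw [h'] at hau
        exact hay (h a hau.symm)
    obtain ⟨p, q, hpa, hqa, hpq, hdom⟩ := pair_of a hca
    have contra : ∀ c : V, c = p ∨ c = q → G.Adj z c → False := by
      rintro c hc hzc
      have hcy : c = y := h c hzc
      obtain ⟨w', hw1, hw2⟩ := L1 p q
      by_cases hwa : w' = a
      · subst hwa
        rcases hc with rfl | rfl
        · exact hw1 (by rw [hcy]; exact hya.symm)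
        · exact hw2 (by rw [hcy]; exact hya.symm)
      · rcases hdom w' hwa with h' | h'
        · exact hw1 h'
        · exact hw2 h'
    rcases hdom z (Ne.symm haz) with h' | h'
    · exact contra p (Or.inl rfl) h'
    · exact contra q (Or.inr rfl) h'
  -- main argument
  by_contra hgoal
  push_neg at hgoal
  obtain ⟨u₀, hu₀y, hu₀z⟩ := hAne
  obtain ⟨w₀, hw₀z, hw₀y⟩ := hBne
  -- choose v ∈ N(x) distinct from u₀ and w₀
  have hu₀w₀ : u₀ ≠ w₀ := by rintro rfl; exact L2 u₀ hu₀y hw₀z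
  have hvex : ∃ v : V, G.Adj x v ∧ v ≠ u₀ ∧ v ≠ w₀ := by
    by_contra h
    push_neg at h
    have hsub : G.neighborSet x ⊆ {u₀, w₀} := by
      intro c hc
      by_cases hcu : c = u₀
      · exact Or.inl hcu
      · exact Or.inr (h c hc hcu)
    have hle : (G.neighborSet x).ncard ≤ ({u₀, w₀} : Set V).ncard :=
      Set.ncard_le_ncard hsub (Set.toFinite _)
    have h2 : ({u₀, w₀} : Set V).ncard ≤ 2 := by
      refine le_trans (Set.ncard_insert_le _ _) ?_
      simp
    have hxx : (G.neighborSet x).ncard = maxDeg G := hx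
    omega
  obtain ⟨v, hxv, hvu₀, hvw₀⟩ := hvex
  have hvx : v ≠ x := hxv.ne'
  have hvy : v ≠ y := by rintro rfl; exact hxy hxv
  have hvz : v ≠ z := by rintro rfl; exact hxz hxv
  have hcv : ¬ ∃ u : V, G.Adj v u ∧ deg G u = 1 := by
    rintro ⟨u, hvu, hu1⟩
    rcases deg_C u v hvu hvx hu1 with h' | h'
    · rw [h'] at hvu hu1
      exact deg_ge2 y v u₀ hvu.symm hu₀y hvu₀ hu1
    · rw [h'] at hvu hu1
      exact deg_ge2 z v w₀ hvu.symm hw₀z hvw₀ hu1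
  obtain ⟨p, q, hpv, hqv, hpq, hdom⟩ := pair_of v hcv
  have core : ∀ cy cz : V, G.Adj y cy → G.Adj z cz → G.Adj cy cz →
      (∀ w : V, w ≠ v → G.Adj w cy ∨ G.Adj w cz) → False := by
    intro cy cz hcy hcz hcycz hdm
    by_cases h1 : cy = z
    · subst h1
      by_cases h2 : cz = y
      · subst h2
        rcases hdm x (Ne.symm hvx) with h' | h'
        · exact hxz h'
        · exact hxy h'
      · rcases hdm u₀ (Ne.symm hvu₀) with h' | h'
        · exact L2 u₀ hu₀y h'.symm
        · exact hgoal u₀ cz hu₀y hu₀z hcz h2 h'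
    · by_cases h2 : cz = y
      · subst h2
        rcases hdm w₀ (Ne.symm hvw₀) with h' | h'
        · exact hgoal cy w₀ hcy h1 hw₀z hw₀y h'.symm
        · exact L2 w₀ h'.symm hw₀z
      · exact hgoal cy cz hcy h1 hcz h2 hcycz
  rcases hdom y (Ne.symm hvy) with hy1 | hy1 <;>
    rcases hdom z (Ne.symm hvz) with hz1 | hz1
  · exact L2 p hy1 hz1
  · exact core p q hy1 hz1 hpq hdom
  · exact core q p hy1 hz1 hpq.symm (fun w hw => (hdom w hw).symm)
  · exact L2 q hy1 hz1
end
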